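/- Let α > 0, a > 0 and E₀ < E₁ be reals, and define the density D(ε) := a·(ε − E₀)^α on [E₀, E₁]. For β > 0 set Z(β) := ∫_{E₀}^{E₁} D(ε)e^{−βε} dε, U₁(β) := Z(β)^{−1}∫_{E₀}^{E₁} ε·D(ε)e^{−βε} dε, U₂(β) := Z(β)^{−1}∫_{E₀}^{E₁} ε²·D(ε)e^{−βε} dε, and c(β) := β²(U₂(β) − U₁(β)²). Then lim_{β→∞} c(β) = α + 1. -/

import Mathlib

/-!
Writing `ε = E₀ + (ε - E₀)` and substituting `t = β (ε - E₀)`, the `n`-th energy moment becomes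
`a e^{-βE₀} β^{-(α+1)} ∑ₖ (n choose k) E₀^{n-k} β^{-k} γ(α+1+k, β(E₁-E₀))`, with `γ` the lower
incomplete gamma function. The `E₀`-terms cancel in the variance `U₂ - U₁²`, so
`c(β) = (γ₂ γ₀ - γ₁²) / γ₀²` with `γₖ = γ(α+1+k, β(E₁-E₀))`. As `β → ∞` each `γₖ` tends to
`Γ(α+1+k)`, and `(Γ(s+2) Γ(s) - Γ(s+1)²) / Γ(s)² = s` (the variance of the Gamma distribution of
shape `s`) gives the limit `α + 1`.
-/

open Filter Real Topology intervalIntegral Finset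

noncomputable def lowerIncompleteGamma (s x : ℝ) : ℝ :=
  ∫ t in (0 : ℝ)..x, exp (-t) * t ^ (s - 1)

theorem tendsto_lowerIncompleteGamma_atTop {s : ℝ} (hs : 0 < s) :
    Tendsto (lowerIncompleteGamma s) atTop (𝓝 (Gamma s)) := by
  rw [Gamma_eq_integral hs]
  exact MeasureTheory.intervalIntegral_tendsto_integral_Ioi 0 (GammaIntegral_convergent hs)
    tendsto_id

theorem lowerIncompleteGamma_pos {s x : ℝ} (hs : 0 < s) (hx : 0 < x) :
    0 < lowerIncompleteGamma s x := by
  refine intervalIntegral_pos_of_pos_on ?_ (fun t ht => ?_) hx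
  · exact (intervalIntegrable_rpow' (by linarith)).continuousOn_mul
      (continuous_exp.comp continuous_neg).continuousOn
  · have := rpow_pos_of_pos ht.1 (s - 1)
    positivity

theorem Gamma_add_two_mul_Gamma_sub_sq {s : ℝ} (hs : 0 < s) :
    (Gamma (s + 2) * Gamma s - Gamma (s + 1) ^ 2) / Gamma s ^ 2 = s := by
  have h1 : Gamma (s + 1) = s * Gamma s := Gamma_add_one hs.ne'
  have h2 : Gamma (s + 2) = (s + 1) * (s * Gamma s) := by
    rw [show s + 2 = s + 1 + 1 by ring, Gamma_add_one (by positivity), h1]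
  have hΓ := (Gamma_pos_of_pos hs).ne'
  rw [h1, h2]
  field_simp
  ring

theorem rpow_add_natCast_of_nonneg {x α : ℝ} (hx : 0 ≤ x) (hα : -1 < α) (k : ℕ) :
    x ^ (α + k) = x ^ α * x ^ k := by
  rcases k with _ | k
  · simp
  · exact rpow_add_natCast' hx (by push_cast; linarith)

theorem integral_sub_rpow_mul_exp {s β E₀ E₁ : ℝ} (hβ : 0 < β) (hE : E₀ ≤ E₁) :
    ∫ ε in E₀..E₁, (ε - E₀) ^ s * exp (-β * ε)
      = exp (-β * E₀) / β ^ (s + 1) * lowerIncompleteGamma (s + 1) (β * (E₁ - E₀)) := by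
  have hpt : ∀ ε ∈ Set.uIcc E₀ E₁, (ε - E₀) ^ s * exp (-β * ε)
      = exp (-β * E₀) / β ^ s * (exp (-(β * ε - β * E₀)) * (β * ε - β * E₀) ^ (s + 1 - 1)) := by
    intro ε hε
    rw [Set.uIcc_of_le hE] at hε
    rw [add_sub_cancel_right, ← mul_sub, mul_rpow hβ.le (sub_nonneg.2 hε.1),
      show -(β * (ε - E₀)) = -β * ε - -β * E₀ by ring, exp_sub]
    field_simp
  rw [integral_congr hpt, integral_const_mul, integral_comp_mul_sub
      (fun t => exp (-t) * t ^ (s + 1 - 1)) hβ.ne', lowerIncompleteGamma, sub_self, ← mul_sub,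
    rpow_add_one hβ.ne', smul_eq_mul]
  field_simp

theorem intervalIntegrable_sub_rpow_mul_exp {s β E₀ E₁ : ℝ} (hs : -1 < s) :
    IntervalIntegrable (fun ε => (ε - E₀) ^ s * exp (-β * ε)) MeasureTheory.volume E₀ E₁ := by
  have h := (intervalIntegrable_rpow' (a := 0) (b := E₁ - E₀) hs).comp_sub_right E₀
  rw [zero_add, sub_add_cancel] at h
  exact h.mul_continuousOn (by fun_prop)

theorem integral_pow_mul_powerLaw_mul_exp (n : ℕ) {α a β E₀ E₁ : ℝ} (hα : -1 < α)
    (hβ : 0 < β) (hE : E₀ ≤ E₁) :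
    ∫ ε in E₀..E₁, ε ^ n * (a * (ε - E₀) ^ α) * exp (-β * ε)
      = a * exp (-β * E₀) / β ^ (α + 1) * ∑ k ∈ range (n + 1),
          n.choose k * E₀ ^ (n - k) / β ^ k * lowerIncompleteGamma (α + 1 + k) (β * (E₁ - E₀)) := by
  have hpt : ∀ ε ∈ Set.uIcc E₀ E₁, ε ^ n * (a * (ε - E₀) ^ α) * exp (-β * ε)
      = ∑ k ∈ range (n + 1),
          a * n.choose k * E₀ ^ (n - k) * ((ε - E₀) ^ (α + k) * exp (-β * ε)) := by
    intro ε hε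
    rw [Set.uIcc_of_le hE] at hε
    rw [show ε ^ n = (ε - E₀ + E₀) ^ n by ring, add_pow, sum_mul, sum_mul]
    refine sum_congr rfl fun k _ => ?_
    rw [rpow_add_natCast_of_nonneg (sub_nonneg.2 hε.1) hα]
    ring
  have hint (k : ℕ) := intervalIntegrable_sub_rpow_mul_exp (β := β) (E₀ := E₀) (E₁ := E₁)
    (lt_add_of_lt_of_nonneg hα (Nat.cast_nonneg k))
  rw [integral_congr hpt, integral_finsetSum fun k _ => (hint k).const_mul _, mul_sum]
  refine sum_congr rfl fun k _ => ?_
  rw [integral_const_mul, integral_sub_rpow_mul_exp hβ hE, add_right_comm,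
    rpow_add_natCast hβ.ne']
  field_simp

theorem specific_heat_low_temperature_limit (α a E₀ E₁ : ℝ)
    (hα : 0 < α) (ha : 0 < a) (hE : E₀ < E₁) :
    Tendsto
      (fun β : ℝ =>
        β ^ 2 *
          ((∫ ε in E₀..E₁, ε ^ 2 * (a * (ε - E₀) ^ α) * Real.exp (-β * ε)) /
              (∫ ε in E₀..E₁, a * (ε - E₀) ^ α * Real.exp (-β * ε))
            - ((∫ ε in E₀..E₁, ε * (a * (ε - E₀) ^ α) * Real.exp (-β * ε)) /
                (∫ ε in E₀..E₁, a * (ε - E₀) ^ α * Real.exp (-β * ε))) ^ 2))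
      atTop (nhds (α + 1)) := by
  set γ : ℕ → ℝ → ℝ := fun k β => lowerIncompleteGamma (α + 1 + k) (β * (E₁ - E₀))
  have hs : 0 < α + 1 := by linarith
  have hγ (k : ℕ) : Tendsto (γ k) atTop (𝓝 (Gamma (α + 1 + k))) :=
    (tendsto_lowerIncompleteGamma_atTop (by positivity)).comp
      (tendsto_id.atTop_mul_const (sub_pos.2 hE))
  have hlim : Tendsto (fun β => (γ 2 β * γ 0 β - γ 1 β ^ 2) / γ 0 β ^ 2) atTop (𝓝 (α + 1)) := by
    have := (((hγ 2).mul (hγ 0)).sub ((hγ 1).pow 2)).div ((hγ 0).pow 2)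
      (by simp [(Gamma_pos_of_pos hs).ne'])
    rwa [Nat.cast_ofNat, Nat.cast_one, Nat.cast_zero, add_zero,
      Gamma_add_two_mul_Gamma_sub_sq hs] at this
  refine hlim.congr' ?_
  filter_upwards [eventually_gt_atTop 0] with β hβ
  have hM (n : ℕ) := integral_pow_mul_powerLaw_mul_exp n (α := α) (a := a) (by linarith) hβ hE.le
  have hZ := hM 0
  have hU := hM 1
  simp only [pow_zero, one_mul, pow_one] at hZ hU
  rw [hZ, hU, hM 2]
  have hγ0 : 0 < γ 0 β := lowerIncompleteGamma_pos (by simpa) (mul_pos hβ (sub_pos.2 hE))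
  simp only [CharP.cast_eq_zero, add_zero, Nat.cast_ofNat, Nat.cast_one, neg_mul, Nat.reduceAdd,
    sum_range_succ, range_one, sum_singleton, Nat.choose_zero_right, tsub_zero, one_mul, pow_zero,
    div_one, Nat.choose_succ_self_right, Nat.add_one_sub_one, pow_one, Nat.choose_self, tsub_self,
    mul_one, one_div, zero_add, zero_tsub, ne_eq, one_ne_zero, not_false_eq_true, div_self, γ]
    at hγ0 ⊢
  field_simp
  ring
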